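/- An H-homothetic deformation of a 3-(α,δ)-Sasaki structure with parameters a > 0, b with c² = a + b > 0, given by η'_i = c η_i, ξ'_i = (1/c) ξ_i, φ'_i = φ_i, g' = a g + b ∑ᵢ η_i ⊗ η_i, yields a 3-(α',δ')-Sasaki structure with α' = αc/a and δ' = δ/c; in particular the sign of α'δ' equals the sign of αδ. -/

import Mathlib

def EvenPerm (i j k : Fin 3) : Prop :=
  (i, j, k) = (0, 1, 2) ∨ (i, j, k) = (1, 2, 0) ∨ (i, j, k) = (2, 0, 1)

/-!
The deformed metric differs from `a g` only along the vertical directions, and `φ_i` acts there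
as the rotation `η_j ↦ -η_k`, `η_k ↦ η_j`. Hence `Φ'_i = a Φ_i - b η_j ∧ η_k`, and
`dη'_i = c dη_i` is matched coefficientwise: the `Φ_i`-part fixes `α' = αc/a`, and the
`η_j ∧ η_k`-part, which picks up `c²` from `η' = c η` and `-b α'` from `Φ'_i`, gives
`α' c² - α' b - δ' c² = (α - δ) c` thanks to `c² - b = a`, i.e. `δ' = δ/c`.
-/

namespace EvenPerm

theorem rotate {i j k : Fin 3} (h : EvenPerm i j k) : EvenPerm k i j := by
  rcases h with h | h | h <;> simp only [Prod.mk.injEq] at h <;>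
    obtain ⟨rfl, rfl, rfl⟩ := h <;> unfold EvenPerm <;> decide

theorem sum_eq {M : Type*} [AddCommMonoid M] {i j k : Fin 3} (h : EvenPerm i j k)
    (f : Fin 3 → M) : ∑ l, f l = f i + f j + f k := by
  rw [Fin.sum_univ_three]
  rcases h with h | h | h <;> simp only [Prod.mk.injEq] at h <;>
    obtain ⟨rfl, rfl, rfl⟩ := h <;> abel

end EvenPerm

section HHomothetic

variable {L : Type*} {a b : ℝ} {g g' : L → L → ℝ} {η : Fin 3 → L → ℝ} {φ : Fin 3 → L → L}

theorem hHomothetic_metric_comp_phi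
    (hg' : ∀ X Y, g' X Y = a * g X Y + b * ∑ i, η i X * η i Y)
    (hηφ : ∀ i X, η i (φ i X) = 0)
    (hηφ2 : ∀ i j k, EvenPerm i j k → ∀ X, η i (φ j X) = η k X ∧ η j (φ i X) = -(η k X))
    {i j k : Fin 3} (h : EvenPerm i j k) (X Y : L) :
    g' X (φ i Y) = a * g X (φ i Y) - b * (η j X * η k Y - η k X * η j Y) := by
  have hj : η j (φ i Y) = -η k Y := (hηφ2 i j k h Y).2
  have hk : η k (φ i Y) = η j Y := (hηφ2 k i j h.rotate Y).1
  rw [hg', h.sum_eq, hηφ, hj, hk]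
  ring

theorem hHomothetic_coeff_eq {α δ c : ℝ} (ha : a ≠ 0) (hc : c ≠ 0) (hc2 : c ^ 2 = a + b)
    (Φ w : ℝ) :
    c * (2 * α * Φ + 2 * (α - δ) * w) =
      2 * (α * c / a) * (a * Φ - b * w) + 2 * (α * c / a - δ / c) * (c ^ 2 * w) := by
  have hb : b = c ^ 2 - a := by linarith
  subst hb
  field_simp
  ring

theorem hHomothetic_sasaki {α δ c : ℝ} (ha : a ≠ 0) (hc : c ≠ 0) (hc2 : c ^ 2 = a + b)
    {η' : Fin 3 → L → ℝ} {dη dη' : Fin 3 → L → L → ℝ}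
    (hg' : ∀ X Y, g' X Y = a * g X Y + b * ∑ i, η i X * η i Y)
    (hη' : ∀ i X, η' i X = c * η i X)
    (hdη' : ∀ i X Y, dη' i X Y = c * dη i X Y)
    (hηφ : ∀ i X, η i (φ i X) = 0)
    (hηφ2 : ∀ i j k, EvenPerm i j k → ∀ X, η i (φ j X) = η k X ∧ η j (φ i X) = -(η k X))
    (hSasaki : ∀ i j k, EvenPerm i j k → ∀ X Y,
      dη i X Y = 2 * α * g X (φ i Y) + 2 * (α - δ) * (η j X * η k Y - η k X * η j Y))
    {i j k : Fin 3} (h : EvenPerm i j k) (X Y : L) :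
    dη' i X Y = 2 * (α * c / a) * g' X (φ i Y) +
      2 * (α * c / a - δ / c) * (η' j X * η' k Y - η' k X * η' j Y) := by
  have hwedge : η' j X * η' k Y - η' k X * η' j Y =
      c ^ 2 * (η j X * η k Y - η k X * η j Y) := by
    simp only [hη']
    ring
  rw [hdη', hSasaki i j k h, hHomothetic_metric_comp_phi hg' hηφ hηφ2 h, hwedge]
  exact hHomothetic_coeff_eq ha hc hc2 _ _

end HHomothetic

theorem stmt3_general {L : Type*} [AddCommGroup L] [Module ℝ L]
    (α δ a b c : ℝ) (ha : 0 < a) (hc2 : c ^ 2 = a + b) (hab : 0 < a + b)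
    (α' δ' : ℝ) (hα' : α' = α * c / a) (hδ' : δ' = δ / c)
    (g g' : L → L → ℝ) (η η' : Fin 3 → L → ℝ) (φ : Fin 3 → L →ₗ[ℝ] L)
    (Φ Φ' : Fin 3 → L → L → ℝ) (dη dη' : Fin 3 → L → L → ℝ)
    (hg' : ∀ X Y, g' X Y = a * g X Y + b * ∑ i, η i X * η i Y)
    (hη' : ∀ i X, η' i X = c * η i X)
    (hΦ : ∀ i X Y, Φ i X Y = g X (φ i Y))
    (hΦ' : ∀ i X Y, Φ' i X Y = g' X (φ i Y))
    (hdη' : ∀ i X Y, dη' i X Y = c * dη i X Y)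
    (hηφ : ∀ i X, η i (φ i X) = 0)
    (hηφ2 : ∀ i j k, EvenPerm i j k → ∀ X, η i (φ j X) = η k X ∧ η j (φ i X) = -(η k X))
    (hSasaki : ∀ i j k, EvenPerm i j k → ∀ X Y,
      dη i X Y = 2 * α * Φ i X Y + 2 * (α - δ) * (η j X * η k Y - η k X * η j Y)) :
    (∀ i j k, EvenPerm i j k → ∀ X Y,
      dη' i X Y = 2 * α' * Φ' i X Y + 2 * (α' - δ') * (η' j X * η' k Y - η' k X * η' j Y)) ∧
    α' * δ' = α * δ / a ∧ (0 < α' * δ' ↔ 0 < α * δ) := by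
  have hc : c ≠ 0 := by
    rintro rfl
    linarith
  have hprod : α' * δ' = α * δ / a := by
    rw [hα', hδ']
    field_simp
  refine ⟨fun i j k h X Y => ?_, hprod, by rw [hprod, div_pos_iff_of_pos_right ha]⟩
  simp only [hΦ] at hSasaki
  rw [hΦ', hα', hδ']
  exact hHomothetic_sasaki ha.ne' hc hc2 hg' hη' hdη' hηφ hηφ2 hSasaki h X Y

/-- An H-homothetic deformation of a 3-(α,δ)-Sasaki structure with parameters
`a > 0`, `b`, `c² = a + b > 0` yields a 3-(α',δ')-Sasaki structure with
`α' = αc/a`, `δ' = δ/c`; in particular `α'δ' = αδ/a` has the same sign as `αδ`. -/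
theorem stmt3 {L : Type*} [AddCommGroup L] [Module ℝ L]
    (α δ a b c : ℝ) (hα : α ≠ 0) (ha : 0 < a) (hc2 : c ^ 2 = a + b) (hab : 0 < a + b)
    (α' δ' : ℝ) (hα' : α' = α * c / a) (hδ' : δ' = δ / c)
    (g g' : L → L → ℝ) (η η' : Fin 3 → L → ℝ) (φ : Fin 3 → L →ₗ[ℝ] L)
    (ξ : Fin 3 → L)
    (Φ Φ' : Fin 3 → L → L → ℝ) (dη dη' : Fin 3 → L → L → ℝ)
    (hg' : ∀ X Y, g' X Y = a * g X Y + b * ∑ i, η i X * η i Y)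
    (hη' : ∀ i X, η' i X = c * η i X)
    (hΦ : ∀ i X Y, Φ i X Y = g X (φ i Y))
    (hΦ' : ∀ i X Y, Φ' i X Y = g' X (φ i Y))
    (hdη' : ∀ i X Y, dη' i X Y = c * dη i X Y)
    (hηφ : ∀ i X, η i (φ i X) = 0)
    (hηφ2 : ∀ i j k, EvenPerm i j k → ∀ X, η i (φ j X) = η k X ∧ η j (φ i X) = -(η k X))
    (hSasaki : ∀ i j k, EvenPerm i j k → ∀ X Y,
      dη i X Y = 2 * α * Φ i X Y + 2 * (α - δ) * (η j X * η k Y - η k X * η j Y)) :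
    (∀ i j k, EvenPerm i j k → ∀ X Y,
      dη' i X Y = 2 * α' * Φ' i X Y + 2 * (α' - δ') * (η' j X * η' k Y - η' k X * η' j Y)) ∧
    α' * δ' = α * δ / a ∧ (0 < α' * δ' ↔ 0 < α * δ) :=
  stmt3_general α δ a b c ha hc2 hab α' δ' hα' hδ' g g' η η' φ Φ Φ' dη dη' hg' hη' hΦ hΦ' hdη' hηφ
    hηφ2 hSasaki
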